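/- The strict gadget has exactly four subtours, namely T1, T2, T3, and T4. Moreover: T1 is a single path with endpoints Z and Z'; T2 is the disjoint union of a path with endpoints X and X' and a path with endpoints Z and Z'; T3 is the disjoint union of a path with endpoints Y and Y' and a path with endpoints Z and Z'; and T4 is the disjoint union of three paths with endpoint pairs (X, X'), (Y, Y'), and (Z, Z'). In particular, for each of these four types the strict gadget has a unique subtour of that type, and the strict gadget has no subtour of any other type. -/

import Mathlib

open SimpleGraph

noncomputable section

/-- The degree of a vertex `v` in a simple graph `G` (as a set cardinality). -/
def gdeg {V : Type*} (G : SimpleGraph V) (v : V) : ℕ := {u | G.Adj v u}.ncard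

/-- The 14 vertices of the strict gadget. -/
inductive SGV : Type
  | X | X' | Y | Y' | Z | Z' | a | a' | b | b' | m1 | m2 | m3 | m4
  deriving DecidableEq

open SGV

/-- The eight subdivision edges of the strict gadget. -/
def subdivEdges : Set (Sym2 SGV) :=
  {s(a', m1), s(m1, X), s(a, m2), s(m2, X'), s(b, m3), s(m3, b'), s(Y, m4), s(m4, Y')}

/-- The edge set of the strict gadget. -/
def strictEdges : Set (Sym2 SGV) :=
  subdivEdges ∪
    {s(a, b), s(a', b'), s(X, b), s(X', b'), s(Y', a), s(a, Z'), s(Y, Z'), s(Z, a'),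
     s(Z, Y'), s(Z, Z')}

/-- The strict gadget. -/
def strictGadget : SimpleGraph SGV := SimpleGraph.fromEdgeSet strictEdges

/-- A subtour of the strict gadget, given by its edge set `T`: a spanning disjoint union
of paths (acyclic, all degrees 1 or 2) in which `Z` and `Z'` have degree one and every
degree-one vertex lies in `{X, X', Y, Y', Z, Z'}`. -/
def IsStrictSubtour (T : Set (Sym2 SGV)) : Prop :=
  T ⊆ strictGadget.edgeSet ∧
  (SimpleGraph.fromEdgeSet T).IsAcyclic ∧
  (∀ v : SGV, gdeg (SimpleGraph.fromEdgeSet T) v = 1 ∨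
      gdeg (SimpleGraph.fromEdgeSet T) v = 2) ∧
  gdeg (SimpleGraph.fromEdgeSet T) Z = 1 ∧
  gdeg (SimpleGraph.fromEdgeSet T) Z' = 1 ∧
  (∀ v : SGV, gdeg (SimpleGraph.fromEdgeSet T) v = 1 →
      v ∈ ({X, X', Y, Y', Z, Z'} : Set SGV))

/-- The four standard subtours of the strict gadget. -/
def T1 : Set (Sym2 SGV) := subdivEdges ∪ {s(X, b), s(Y', a), s(X', b'), s(Y, Z'), s(Z, a')}
def T2 : Set (Sym2 SGV) := subdivEdges ∪ {s(a', b'), s(a, b), s(Z, Y'), s(Y, Z')}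
def T3 : Set (Sym2 SGV) := subdivEdges ∪ {s(X, b), s(X', b'), s(a, Z'), s(Z, a')}
def T4 : Set (Sym2 SGV) := subdivEdges ∪ {s(a', b'), s(a, b), s(Z, Z')}

/-- `G` is a single spanning path with endpoints `z` and `z'`. -/
def IsOnePath {W : Type*} (G : SimpleGraph W) (z z' : W) : Prop :=
  G.IsAcyclic ∧ (∀ v : W, gdeg G v = 1 ∨ gdeg G v = 2) ∧
  {v | gdeg G v = 1} = {z, z'} ∧ z ≠ z' ∧ G.Reachable z z'

/-- `G` is a spanning disjoint union of an `xx'`-path and a `zz'`-path. -/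
def IsTwoPaths {W : Type*} (G : SimpleGraph W) (x x' z z' : W) : Prop :=
  G.IsAcyclic ∧ (∀ v : W, gdeg G v = 1 ∨ gdeg G v = 2) ∧
  {v | gdeg G v = 1} = {x, x', z, z'} ∧ [x, x', z, z'].Nodup ∧
  G.Reachable x x' ∧ G.Reachable z z' ∧ ¬ G.Reachable x z

/-- `G` is a spanning disjoint union of an `xx'`-path, a `yy'`-path and a `zz'`-path. -/
def IsThreePaths {W : Type*} (G : SimpleGraph W) (x x' y y' z z' : W) : Prop :=
  G.IsAcyclic ∧ (∀ v : W, gdeg G v = 1 ∨ gdeg G v = 2) ∧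
  {v | gdeg G v = 1} = {x, x', y, y', z, z'} ∧ [x, x', y, y', z, z'].Nodup ∧
  G.Reachable x x' ∧ G.Reachable y y' ∧ G.Reachable z z' ∧
  ¬ G.Reachable x y ∧ ¬ G.Reachable x z ∧ ¬ G.Reachable y z

/-!
Every vertex other than `X, X', Y, Y'` has a prescribed degree in a subtour (one for `Z, Z'`,
two otherwise), and these vertices cover every edge of the gadget. Hence a subtour is determined
by the neighbourhoods of these vertices, and no subtour properly contains another. The subdivision
vertices force the eight subdivision edges; what is left is the choice of the second neighbour of
`a, a', b, b'` and of the neighbour of `Z, Z'`. These six choices have to agree on the edges among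
the six vertices and must not close one of the hexagons `X m1 a' b' m3 b` and `a m2 X' b' m3 b`;
exactly four choices survive, and they span `T1, …, T4`. Conversely, each `Ti` is checked
directly; it is acyclic because its vertices can be labelled so that adjacent vertices get
consecutive labels.
-/

namespace SimpleGraph

variable {V : Type*} {G H : SimpleGraph V}

theorem gdeg_eq_degree [Fintype V] (G : SimpleGraph V) [DecidableRel G.Adj] (v : V) :
    gdeg G v = G.degree v := by
  rw [← card_neighborSet_eq_degree, ← Nat.card_eq_fintype_card, Nat.card_coe_set_eq]
  rfl

/-- A vertex of maximal label on a cycle would have two lower neighbours. -/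
theorem isAcyclic_of_unique_lower_neighbor {α : Type*} [LinearOrder α] (f : V → α)
    (hf : Function.Injective f)
    (h : ∀ v u w, G.Adj v u → G.Adj v w → f u < f v → f w < f v → u = w) : G.IsAcyclic := by
  classical
  intro v c hc
  obtain ⟨m, hm, hmax⟩ := c.support.toFinset.exists_max_image f ⟨v, by simp⟩
  rw [List.mem_toFinset] at hm
  set c' := c.rotate m hm
  have hc' : c'.IsCycle := hc.rotate hm
  have lt_of_adj : ∀ i, G.Adj m (c'.getVert i) → f (c'.getVert i) < f m := fun i hadj =>
    (hmax _ (List.mem_toFinset.2 ((c.mem_support_rotate_iff m hm).1 (c'.getVert_mem_support i)))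
      ).lt_of_ne (hf.ne hadj.ne.symm)
  have hsnd := Walk.adj_snd hc'.not_nil
  have hpen := (Walk.adj_penultimate hc'.not_nil).symm
  exact hc'.snd_ne_penultimate (h m _ _ hsnd hpen (lt_of_adj _ hsnd) (lt_of_adj _ hpen))

theorem isAcyclic_of_adj_succ (f : V → ℕ) (hf : Function.Injective f)
    (h : ∀ u v, G.Adj u v → f u + 1 = f v ∨ f v + 1 = f u) : G.IsAcyclic :=
  isAcyclic_of_unique_lower_neighbor f hf fun v u w hu hw hlu hlw =>
    hf (by rcases h v u hu with h1 | h1 <;> rcases h v w hw with h2 | h2 <;> omega)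

theorem not_isAcyclic_of_adj_hexagon {v₀ v₁ v₂ v₃ v₄ v₅ : V}
    (hnd : [v₀, v₁, v₂, v₃, v₄, v₅].Nodup) (h₀₁ : G.Adj v₀ v₁) (h₁₂ : G.Adj v₁ v₂)
    (h₂₃ : G.Adj v₂ v₃) (h₃₄ : G.Adj v₃ v₄) (h₄₅ : G.Adj v₄ v₅) (h₅₀ : G.Adj v₅ v₀) :
    ¬ G.IsAcyclic := by
  intro hG
  refine hG (.cons h₀₁ (.cons h₁₂ (.cons h₂₃ (.cons h₃₄ (.cons h₄₅ (.cons h₅₀ .nil)))))) ?_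
  simp only [List.nodup_cons, List.mem_cons, List.not_mem_nil] at hnd
  rw [Walk.cons_isCycle_iff]
  simp_all [Walk.cons_isPath_iff, eq_comm]

theorem Reachable.of_isChain {u v : V} (l : List V) (hl : (u :: l).IsChain G.Adj)
    (hv : (u :: l).getLast (List.cons_ne_nil _ _) = v) : G.Reachable u v :=
  (reachable_iff_reflTransGen u v).2 (List.relationReflTransGen_of_exists_isChain_cons l hl hv)

theorem not_reachable_of_closed {S : Set V} (hS : ∀ u w, G.Adj u w → u ∈ S → w ∈ S)
    {u v : V} (hu : u ∈ S) (hv : v ∉ S) : ¬ G.Reachable u v := by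
  rw [reachable_iff_reflTransGen]
  intro h
  exact hv (h.rec hu fun _ hadj hmem => hS _ _ hadj hmem)

theorem neighborSet_eq_of_le_of_gdeg_le {v : V} (hle : G ≤ H)
    (hfin : (H.neighborSet v).Finite) (hdeg : gdeg H v ≤ gdeg G v) :
    G.neighborSet v = H.neighborSet v :=
  Set.eq_of_subset_of_ncard_le (fun _ h => hle h) hdeg hfin

theorem eq_of_le_of_isVertexCover {K : Set V} (hle : G ≤ H) (hK : H.IsVertexCover K)
    (h : ∀ v ∈ K, ∀ w, H.Adj v w → G.Adj v w) : G = H :=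
  le_antisymm hle fun u w huw =>
    (hK huw).elim (h u · w huw) fun hw => (h w hw u huw.symm).symm

theorem subset_edgeSet_of_adj {T : Set (Sym2 V)} (h : ∀ u v, s(u, v) ∈ T → G.Adj u v) :
    T ⊆ G.edgeSet :=
  fun e => Sym2.ind (f := fun e => e ∈ T → e ∈ G.edgeSet) h e

end SimpleGraph

instance : Fintype SGV :=
  ⟨⟨[X, X', Y, Y', Z, Z', a, a', b, b', m1, m2, m3, m4], by decide⟩,
    fun v => by cases v <;> decide⟩

instance : DecidablePred (· ∈ subdivEdges) := fun _ => by dsimp only [subdivEdges]; infer_instance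
instance : DecidablePred (· ∈ strictEdges) := fun _ => by dsimp only [strictEdges]; infer_instance
instance : DecidablePred (· ∈ T1) := fun _ => by dsimp only [T1]; infer_instance
instance : DecidablePred (· ∈ T2) := fun _ => by dsimp only [T2]; infer_instance
instance : DecidablePred (· ∈ T3) := fun _ => by dsimp only [T3]; infer_instance
instance : DecidablePred (· ∈ T4) := fun _ => by dsimp only [T4]; infer_instance
instance : DecidableRel strictGadget.Adj := fun _ _ => by dsimp only [strictGadget]; infer_instance

theorem isVertexCover_strictGadget : strictGadget.IsVertexCover {X, X', Y, Y'}ᶜ := by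
  unfold IsVertexCover
  decide

theorem isAcyclic_T1 : (fromEdgeSet T1).IsAcyclic :=
  isAcyclic_of_adj_succ ([Z, a', m1, X, b, m3, b', X', m2, a, Y', m4, Y, Z'].idxOf ·)
    (by decide) (by decide)

theorem isAcyclic_T2 : (fromEdgeSet T2).IsAcyclic :=
  isAcyclic_of_adj_succ ([X, m1, a', b', m3, b, a, m2, X', Z, Y', m4, Y, Z'].idxOf ·)
    (by decide) (by decide)

theorem isAcyclic_T3 : (fromEdgeSet T3).IsAcyclic :=
  isAcyclic_of_adj_succ ([Y, m4, Y', Z, a', m1, X, b, m3, b', X', m2, a, Z'].idxOf ·)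
    (by decide) (by decide)

theorem isAcyclic_T4 : (fromEdgeSet T4).IsAcyclic :=
  isAcyclic_of_adj_succ ([X, m1, a', b', m3, b, a, m2, X', Y, m4, Y', Z, Z'].idxOf ·)
    (by decide) (by decide)

theorem isStrictSubtour_T1 : IsStrictSubtour T1 := by
  refine ⟨subset_edgeSet_of_adj (by decide), isAcyclic_T1, ?_⟩
  simp only [gdeg_eq_degree]
  decide

theorem isStrictSubtour_T2 : IsStrictSubtour T2 := by
  refine ⟨subset_edgeSet_of_adj (by decide), isAcyclic_T2, ?_⟩
  simp only [gdeg_eq_degree]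
  decide

theorem isStrictSubtour_T3 : IsStrictSubtour T3 := by
  refine ⟨subset_edgeSet_of_adj (by decide), isAcyclic_T3, ?_⟩
  simp only [gdeg_eq_degree]
  decide

theorem isStrictSubtour_T4 : IsStrictSubtour T4 := by
  refine ⟨subset_edgeSet_of_adj (by decide), isAcyclic_T4, ?_⟩
  simp only [gdeg_eq_degree]
  decide

theorem isOnePath_T1 : IsOnePath (fromEdgeSet T1) Z Z' := by
  refine ⟨isAcyclic_T1, ?_, Set.ext ?_, by decide,
    .of_isChain [a', m1, X, b, m3, b', X', m2, a, Y', m4, Y, Z'] (by decide) rfl⟩ <;>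
  simp only [gdeg_eq_degree, Set.mem_ofPred_eq] <;> decide

theorem isTwoPaths_T2 : IsTwoPaths (fromEdgeSet T2) X X' Z Z' := by
  refine ⟨isAcyclic_T2, ?_, Set.ext ?_, by decide,
    .of_isChain [m1, a', b', m3, b, a, m2, X'] (by decide) rfl,
    .of_isChain [Y', m4, Y, Z'] (by decide) rfl,
    not_reachable_of_closed (S := {X, m1, a', b', m3, b, a, m2, X'}) (by decide) (by decide)
      (by decide)⟩ <;>
  simp only [gdeg_eq_degree, Set.mem_ofPred_eq] <;> decide

theorem isTwoPaths_T3 : IsTwoPaths (fromEdgeSet T3) Y Y' Z Z' := by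
  refine ⟨isAcyclic_T3, ?_, Set.ext ?_, by decide,
    .of_isChain [m4, Y'] (by decide) rfl,
    .of_isChain [a', m1, X, b, m3, b', X', m2, a, Z'] (by decide) rfl,
    not_reachable_of_closed (S := {Y, m4, Y'}) (by decide) (by decide) (by decide)⟩ <;>
  simp only [gdeg_eq_degree, Set.mem_ofPred_eq] <;> decide

theorem isThreePaths_T4 : IsThreePaths (fromEdgeSet T4) X X' Y Y' Z Z' := by
  refine ⟨isAcyclic_T4, ?_, Set.ext ?_, by decide,
    .of_isChain [m1, a', b', m3, b, a, m2, X'] (by decide) rfl,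
    .of_isChain [m4, Y'] (by decide) rfl, .of_isChain [Z'] (by decide) rfl,
    not_reachable_of_closed (S := {X, m1, a', b', m3, b, a, m2, X'}) (by decide) (by decide)
      (by decide),
    not_reachable_of_closed (S := {X, m1, a', b', m3, b, a, m2, X'}) (by decide) (by decide)
      (by decide),
    not_reachable_of_closed (S := {Y, m4, Y'}) (by decide) (by decide) (by decide)⟩ <;>
  simp only [gdeg_eq_degree, Set.mem_ofPred_eq] <;> decide

def choiceEdges (ca ca' cb cb' cZ cZ' : SGV) : Set (Sym2 SGV) :=
  subdivEdges ∪ {s(a, ca), s(a', ca'), s(b, cb), s(b', cb'), s(Z, cZ), s(Z', cZ')}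

/-- `ca, ca', cb, cb'` stand for the second neighbours of `a, a', b, b'` in a subtour and `cZ, cZ'`
for the neighbours of `Z, Z'`. The equivalences say that the choices agree on the edges among these
six vertices; the last two clauses exclude the hexagons `X m1 a' b' m3 b` and `a m2 X' b' m3 b`. -/
def CompatibleChoices (ca ca' cb cb' cZ cZ' : SGV) : Prop :=
  (ca = b ∨ ca = Y' ∨ ca = Z') ∧ (ca' = b' ∨ ca' = Z) ∧ (cb = a ∨ cb = X) ∧
  (cb' = a' ∨ cb' = X') ∧ (cZ = a' ∨ cZ = Y' ∨ cZ = Z') ∧ (cZ' = a ∨ cZ' = Y ∨ cZ' = Z) ∧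
  (b = ca ↔ a = cb) ∧ (b' = ca' ↔ a' = cb') ∧ (Z' = ca ↔ a = cZ') ∧ (Z = ca' ↔ a' = cZ) ∧
  (Z' = cZ ↔ Z = cZ') ∧ ¬ (cb = X ∧ cb' = a') ∧ ¬ (cb = a ∧ cb' = X')

theorem CompatibleChoices.cases {ca ca' cb cb' cZ cZ' : SGV}
    (h : CompatibleChoices ca ca' cb cb' cZ cZ') :
    (ca = Y' ∧ ca' = Z ∧ cb = X ∧ cb' = X' ∧ cZ = a' ∧ cZ' = Y) ∨
    (ca = b ∧ ca' = b' ∧ cb = a ∧ cb' = a' ∧ cZ = Y' ∧ cZ' = Y) ∨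
    (ca = Z' ∧ ca' = Z ∧ cb = X ∧ cb' = X' ∧ cZ = a' ∧ cZ' = a) ∨
    (ca = b ∧ ca' = b' ∧ cb = a ∧ cb' = a' ∧ cZ = Z' ∧ cZ' = Z) := by
  obtain ⟨ha, ha', hb, hb', hZ, hZ', hcompat⟩ := h
  rcases ha with rfl | rfl | rfl <;> rcases ha' with rfl | rfl <;> rcases hb with rfl | rfl <;>
    rcases hb' with rfl | rfl <;> rcases hZ with rfl | rfl | rfl <;>
    rcases hZ' with rfl | rfl | rfl <;> revert hcompat <;> decide

theorem T1_subset_choiceEdges : T1 ⊆ choiceEdges Y' Z X X' a' Y :=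
  Set.union_subset_union_right _ (by simp [Set.insert_subset_iff, Sym2.eq_swap])

theorem T2_subset_choiceEdges : T2 ⊆ choiceEdges b b' a a' Y' Y :=
  Set.union_subset_union_right _ (by simp [Set.insert_subset_iff, Sym2.eq_swap])

theorem T3_subset_choiceEdges : T3 ⊆ choiceEdges Z' Z X X' a' a :=
  Set.union_subset_union_right _ (by simp [Set.insert_subset_iff, Sym2.eq_swap])

theorem T4_subset_choiceEdges : T4 ⊆ choiceEdges b b' a a' Z' Z :=
  Set.union_subset_union_right _ (by simp [Set.insert_subset_iff, Sym2.eq_swap])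

namespace IsStrictSubtour

variable {T T' : Set (Sym2 SGV)}

theorem le (hT : IsStrictSubtour T) : fromEdgeSet T ≤ strictGadget :=
  fromEdgeSet_edgeSet strictGadget ▸ fromEdgeSet_mono hT.1

theorem adj_iff (hT : IsStrictSubtour T) {u v : SGV} :
    (fromEdgeSet T).Adj u v ↔ s(u, v) ∈ T :=
  fromEdgeSet_adj T |>.trans ⟨And.left, fun h => ⟨h, (strictGadget.mem_edgeSet.1 (hT.1 h)).ne⟩⟩

theorem edgeSet_fromEdgeSet (hT : IsStrictSubtour T) : (fromEdgeSet T).edgeSet = T :=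
  Set.ext <| Sym2.ind fun _ _ => hT.adj_iff

theorem gdeg_eq_two (hT : IsStrictSubtour T) {v : SGV}
    (hv : v ∉ ({X, X', Y, Y', Z, Z'} : Set SGV)) : gdeg (fromEdgeSet T) v = 2 :=
  (hT.2.2.1 v).resolve_left fun h => hv (hT.2.2.2.2.2 v h)

theorem gdeg_eq_gdeg (hT : IsStrictSubtour T) (hT' : IsStrictSubtour T') {v : SGV}
    (hv : v ∉ ({X, X', Y, Y'} : Set SGV)) :
    gdeg (fromEdgeSet T) v = gdeg (fromEdgeSet T') v := by
  by_cases hv' : v = Z ∨ v = Z'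
  · rcases hv' with rfl | rfl
    exacts [hT.2.2.2.1.trans hT'.2.2.2.1.symm, hT.2.2.2.2.1.trans hT'.2.2.2.2.1.symm]
  · have hv'' : v ∉ ({X, X', Y, Y', Z, Z'} : Set SGV) := by simp_all
    rw [hT.gdeg_eq_two hv'', hT'.gdeg_eq_two hv'']

theorem eq_of_subset (hT : IsStrictSubtour T) (hT' : IsStrictSubtour T') (h : T ⊆ T') :
    T = T' := by
  have hle : fromEdgeSet T ≤ fromEdgeSet T' := fromEdgeSet_mono h
  have hG : fromEdgeSet T = fromEdgeSet T' :=
    eq_of_le_of_isVertexCover hle (isVertexCover_strictGadget.mono hT'.le) fun v hv w =>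
      (Set.ext_iff.1 (neighborSet_eq_of_le_of_gdeg_le hle (Set.toFinite _)
        (hT'.gdeg_eq_gdeg hT hv).le) w).2
  rw [← hT.edgeSet_fromEdgeSet, ← hT'.edgeSet_fromEdgeSet, hG]

theorem mem_of_adj_of_gdeg_eq_two (hT : IsStrictSubtour T) {v w : SGV}
    (hv : v ∉ ({X, X', Y, Y', Z, Z'} : Set SGV)) (hdeg : gdeg strictGadget v = 2)
    (hw : strictGadget.Adj v w) : s(v, w) ∈ T :=
  hT.adj_iff.1 <| (Set.ext_iff.1 (neighborSet_eq_of_le_of_gdeg_le hT.le (Set.toFinite _)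
    (hdeg.trans (hT.gdeg_eq_two hv).symm).le) w).2 hw

theorem subdivEdges_subset (hT : IsStrictSubtour T) : subdivEdges ⊆ T := by
  have hdeg : ∀ v ∈ ({m1, m2, m3, m4} : Set SGV),
      v ∉ ({X, X', Y, Y', Z, Z'} : Set SGV) ∧ gdeg strictGadget v = 2 := by
    simp only [gdeg_eq_degree]
    decide
  have hm : ∀ v ∈ ({m1, m2, m3, m4} : Set SGV), ∀ w, strictGadget.Adj v w → s(v, w) ∈ T :=
    fun v hv _ => hT.mem_of_adj_of_gdeg_eq_two (hdeg v hv).1 (hdeg v hv).2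
  refine Sym2.ind fun v w h => ?_
  obtain ⟨hv, hw⟩ | ⟨hw, hv⟩ := (by decide : ∀ v w, s(v, w) ∈ subdivEdges →
    v ∈ ({m1, m2, m3, m4} : Set SGV) ∧ strictGadget.Adj v w ∨
      w ∈ ({m1, m2, m3, m4} : Set SGV) ∧ strictGadget.Adj w v) v w h
  exacts [hm v hv w hw, Sym2.eq_swap ▸ hm w hw v hv]

theorem adj_of_mem_subdivEdges (hT : IsStrictSubtour T) {u v : SGV}
    (h : s(u, v) ∈ subdivEdges) : (fromEdgeSet T).Adj u v :=
  hT.adj_iff.2 (hT.subdivEdges_subset h)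

theorem exists_mem_iff_eq_or_eq (hT : IsStrictSubtour T) {v x : SGV}
    (hv : v ∉ ({X, X', Y, Y', Z, Z'} : Set SGV)) (hx : s(v, x) ∈ T) :
    ∃ y, strictGadget.Adj v y ∧ y ≠ x ∧ ∀ u, s(v, u) ∈ T ↔ u = x ∨ u = y := by
  obtain ⟨p, q, hpq, hN⟩ := Set.ncard_eq_two.1 (hT.gdeg_eq_two hv)
  have hmem : ∀ u, s(v, u) ∈ T ↔ u = p ∨ u = q :=
    fun u => hT.adj_iff.symm.trans (Set.ext_iff.1 hN u)
  rcases (hmem x).1 hx with rfl | rfl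
  · exact ⟨q, hT.le (hT.adj_iff.2 ((hmem q).2 (.inr rfl))), hpq.symm, hmem⟩
  · exact ⟨p, hT.le (hT.adj_iff.2 ((hmem p).2 (.inl rfl))), hpq,
      fun u => (hmem u).trans or_comm⟩

theorem exists_mem_iff_eq (hT : IsStrictSubtour T) {v : SGV}
    (hv : gdeg (fromEdgeSet T) v = 1) : ∃ y, strictGadget.Adj v y ∧ ∀ u, s(v, u) ∈ T ↔ u = y := by
  obtain ⟨y, hN⟩ := Set.ncard_eq_one.1 hv
  have hmem : ∀ u, s(v, u) ∈ T ↔ u = y := fun u => hT.adj_iff.symm.trans (Set.ext_iff.1 hN u)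
  exact ⟨y, hT.le (hT.adj_iff.2 ((hmem y).2 rfl)), hmem⟩

theorem not_mem_b'a'_of_mem_bX (hT : IsStrictSubtour T) (hbX : s(b, X) ∈ T) : s(b', a') ∉ T :=
  fun hb'a' => not_isAcyclic_of_adj_hexagon (v₀ := X) (v₁ := m1) (v₂ := a') (v₃ := b')
    (v₄ := m3) (v₅ := b) (by decide) (hT.adj_of_mem_subdivEdges (by decide))
    (hT.adj_of_mem_subdivEdges (by decide)) (hT.adj_iff.2 hb'a').symm
    (hT.adj_of_mem_subdivEdges (by decide)) (hT.adj_of_mem_subdivEdges (by decide))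
    (hT.adj_iff.2 hbX) hT.2.1

theorem not_mem_b'X'_of_mem_ba (hT : IsStrictSubtour T) (hba : s(b, a) ∈ T) : s(b', X') ∉ T :=
  fun hb'X' => not_isAcyclic_of_adj_hexagon (v₀ := a) (v₁ := m2) (v₂ := X') (v₃ := b')
    (v₄ := m3) (v₅ := b) (by decide) (hT.adj_of_mem_subdivEdges (by decide))
    (hT.adj_of_mem_subdivEdges (by decide)) (hT.adj_iff.2 hb'X').symm
    (hT.adj_of_mem_subdivEdges (by decide)) (hT.adj_of_mem_subdivEdges (by decide))
    (hT.adj_iff.2 hba) hT.2.1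

theorem exists_compatibleChoices (hT : IsStrictSubtour T) :
    ∃ ca ca' cb cb' cZ cZ', CompatibleChoices ca ca' cb cb' cZ cZ' ∧
      choiceEdges ca ca' cb cb' cZ cZ' ⊆ T := by
  have hsub := hT.subdivEdges_subset
  obtain ⟨ca, hca, hca₂, hNa⟩ :=
    hT.exists_mem_iff_eq_or_eq (v := a) (x := m2) (by decide) (hsub (by decide))
  obtain ⟨ca', hca', hca'₂, hNa'⟩ :=
    hT.exists_mem_iff_eq_or_eq (v := a') (x := m1) (by decide) (hsub (by decide))
  obtain ⟨cb, hcb, hcb₂, hNb⟩ :=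
    hT.exists_mem_iff_eq_or_eq (v := b) (x := m3) (by decide) (hsub (by decide))
  obtain ⟨cb', hcb', hcb'₂, hNb'⟩ :=
    hT.exists_mem_iff_eq_or_eq (v := b') (x := m3) (by decide) (hsub (by decide))
  obtain ⟨cZ, hcZ, hNZ⟩ := hT.exists_mem_iff_eq hT.2.2.2.1
  obtain ⟨cZ', hcZ', hNZ'⟩ := hT.exists_mem_iff_eq hT.2.2.2.2.1
  have hsymm : ∀ u v, s(u, v) ∈ T ↔ s(v, u) ∈ T := fun u v => by rw [Sym2.eq_swap]
  refine ⟨ca, ca', cb, cb', cZ, cZ', ⟨?_, ?_, ?_, ?_, ?_, ?_, ?_, ?_, ?_, ?_, ?_, ?_, ?_⟩, ?_⟩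
  · exact (by decide : ∀ y, strictGadget.Adj a y → y ≠ m2 → y = b ∨ y = Y' ∨ y = Z') _ hca hca₂
  · exact (by decide : ∀ y, strictGadget.Adj a' y → y ≠ m1 → y = b' ∨ y = Z) _ hca' hca'₂
  · exact (by decide : ∀ y, strictGadget.Adj b y → y ≠ m3 → y = a ∨ y = X) _ hcb hcb₂
  · exact (by decide : ∀ y, strictGadget.Adj b' y → y ≠ m3 → y = a' ∨ y = X') _ hcb' hcb'₂
  · exact (by decide : ∀ y, strictGadget.Adj Z y → y = a' ∨ y = Y' ∨ y = Z') _ hcZ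
  · exact (by decide : ∀ y, strictGadget.Adj Z' y → y = a ∨ y = Y ∨ y = Z) _ hcZ'
  · simpa [hNa, hNb] using hsymm a b
  · simpa [hNa', hNb'] using hsymm a' b'
  · simpa [hNa, hNZ'] using hsymm a Z'
  · simpa [hNa', hNZ] using hsymm a' Z
  · simpa [hNZ, hNZ'] using hsymm Z Z'
  · rintro ⟨rfl, rfl⟩
    exact hT.not_mem_b'a'_of_mem_bX ((hNb X).2 (.inr rfl)) ((hNb' a').2 (.inr rfl))
  · rintro ⟨rfl, rfl⟩
    exact hT.not_mem_b'X'_of_mem_ba ((hNb a).2 (.inr rfl)) ((hNb' X').2 (.inr rfl))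
  · refine Set.union_subset hsub ?_
    simp only [Set.insert_subset_iff, Set.singleton_subset_iff]
    exact ⟨(hNa _).2 (.inr rfl), (hNa' _).2 (.inr rfl), (hNb _).2 (.inr rfl),
      (hNb' _).2 (.inr rfl), (hNZ _).2 rfl, (hNZ' _).2 rfl⟩

theorem eq_T1_or_T2_or_T3_or_T4 (hT : IsStrictSubtour T) :
    T = T1 ∨ T = T2 ∨ T = T3 ∨ T = T4 := by
  obtain ⟨ca, ca', cb, cb', cZ, cZ', hc, hsub⟩ := hT.exists_compatibleChoices
  rcases hc.cases with ⟨rfl, rfl, rfl, rfl, rfl, rfl⟩ | ⟨rfl, rfl, rfl, rfl, rfl, rfl⟩ |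
    ⟨rfl, rfl, rfl, rfl, rfl, rfl⟩ | ⟨rfl, rfl, rfl, rfl, rfl, rfl⟩
  · exact .inl (isStrictSubtour_T1.eq_of_subset hT (T1_subset_choiceEdges.trans hsub)).symm
  · exact .inr <| .inl
      (isStrictSubtour_T2.eq_of_subset hT (T2_subset_choiceEdges.trans hsub)).symm
  · exact .inr <| .inr <| .inl
      (isStrictSubtour_T3.eq_of_subset hT (T3_subset_choiceEdges.trans hsub)).symm
  · exact .inr <| .inr <| .inr
      (isStrictSubtour_T4.eq_of_subset hT (T4_subset_choiceEdges.trans hsub)).symm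

end IsStrictSubtour

/-- the strict gadget has exactly the four subtours `T1, T2, T3, T4`; they
are pairwise distinct; `T1` is a single `ZZ'`-path; `T2` is an `XX'`-path together with a
`ZZ'`-path; `T3` is a `YY'`-path together with a `ZZ'`-path; and `T4` consists of an
`XX'`-path, a `YY'`-path and a `ZZ'`-path. -/
theorem stmt_6 :
    (∀ T : Set (Sym2 SGV), IsStrictSubtour T ↔ (T = T1 ∨ T = T2 ∨ T = T3 ∨ T = T4)) ∧
    (T1 ≠ T2 ∧ T1 ≠ T3 ∧ T1 ≠ T4 ∧ T2 ≠ T3 ∧ T2 ≠ T4 ∧ T3 ≠ T4) ∧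
    IsOnePath (SimpleGraph.fromEdgeSet T1) Z Z' ∧
    IsTwoPaths (SimpleGraph.fromEdgeSet T2) X X' Z Z' ∧
    IsTwoPaths (SimpleGraph.fromEdgeSet T3) Y Y' Z Z' ∧
    IsThreePaths (SimpleGraph.fromEdgeSet T4) X X' Y Y' Z Z' := by
  refine ⟨fun T => ⟨IsStrictSubtour.eq_T1_or_T2_or_T3_or_T4, ?_⟩, ⟨?_, ?_, ?_, ?_, ?_, ?_⟩,
    isOnePath_T1, isTwoPaths_T2, isTwoPaths_T3, isThreePaths_T4⟩
  · rintro (rfl | rfl | rfl | rfl)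
    exacts [isStrictSubtour_T1, isStrictSubtour_T2, isStrictSubtour_T3, isStrictSubtour_T4]
  exacts [ne_of_mem_of_not_mem' (a := s(X, b)) (by decide) (by decide),
    ne_of_mem_of_not_mem' (a := s(Y', a)) (by decide) (by decide),
    ne_of_mem_of_not_mem' (a := s(X, b)) (by decide) (by decide),
    ne_of_mem_of_not_mem' (a := s(a, b)) (by decide) (by decide),
    ne_of_mem_of_not_mem' (a := s(Z, Y')) (by decide) (by decide),
    ne_of_mem_of_not_mem' (a := s(X, b)) (by decide) (by decide)]
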